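/- arXiv:1705.10718 — 2 statements merged into one kernel-verified Lean document; each statement's English description precedes it below -/
import Mathlib

section
/- Let (−)^‡ be the linear involution of the completed ring of symmetric functions defined on Schur functions by s_λ^‡ = (−1)^{|λ|} s_{λ†}, where λ† is the transpose partition. Then Σ_{n≥0} σ_n^‡ t^n = (Σ_{n≥0} σ_n t^n)^{−1} as formal power series in t; in particular σ_0^‡ = σ_0^{−1}. -/
open scoped Classical

abbrev SymFn := MvPowerSeries ℕ ℚ

namespace SymFn

noncomputable def cf (F : SymFn) (d : ℕ →₀ ℕ) : ℚ := MvPowerSeries.coeff d F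
noncomputable def ofCf (c : (ℕ →₀ ℕ) → ℚ) : SymFn := c
noncomputable def seriesSum {ι : Type*} (f : ι → SymFn) : SymFn :=
  ofCf fun d => ∑' i, cf (f i) d
def degOf (d : ℕ →₀ ℕ) : ℕ := d.sum fun _ k => k
noncomputable def h (n : ℕ) : SymFn := ofCf fun d => if degOf d = n then 1 else 0

/-- `h` indexed by an integer; zero for negative indices. -/
noncomputable def hz (z : ℤ) : SymFn := if z < 0 then 0 else h z.toNat

/-- The Schur function of a partition, presented as its weakly decreasing list of
parts `l`, via the Jacobi–Trudi determinant `s_λ = det(h_{λ_i − i + j})`. -/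
noncomputable def schurList (l : List ℕ) : SymFn :=
  Matrix.det (fun i j : Fin l.length => hz ((l.get i : ℤ) - (i : ℤ) + (j : ℤ)))

/-- The weakly decreasing list of parts of a partition. -/
def partsList {n : ℕ} (lam : Nat.Partition n) : List ℕ :=
  (lam.parts.sort (· ≤ ·)).reverse

/-- The Schur function `s_λ`. -/
noncomputable def schur {n : ℕ} (lam : Nat.Partition n) : SymFn :=
  schurList (partsList lam)

/-- The list of parts of the transpose (conjugate) of the partition with
weakly decreasing part list `l`. -/
def conjList (l : List ℕ) : List ℕ :=
  ((List.range l.sum).map fun j => Multiset.card ((l : Multiset ℕ).filter fun a => j < a)).filter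
    (fun x => 0 < x)

end SymFn

namespace SymFn

/-- The image of the Schur function under the involution `(−)^‡`,
`s_λ^‡ = (−1)^{|λ|} s_{λ†}`, for `λ` given by its weakly decreasing part list. -/
noncomputable def schurListDdag (l : List ℕ) : SymFn :=
  ((-1 : ℚ) ^ l.sum) • schurList (conjList l)

/-- The part list of the one-row partition `(k)`. -/
def rowList (k : ℕ) : List ℕ := if k = 0 then [] else [k]

/-- `σ_n = Σ_{k ≥ n} C(k,n) s_{(k)}`. -/
noncomputable def sigma (n : ℕ) : SymFn :=
  seriesSum fun k => (k.choose n : ℚ) • schurList (rowList k)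

/-- `σ_n^‡`, the image of `σ_n = Σ_{k ≥ n} C(k,n) s_{(k)}` under the linear
involution `(−)^‡` (which sends `s_λ` to `(−1)^{|λ|} s_{λ†}` and is extended
linearly to infinite sums). -/
noncomputable def sigmaDdag (n : ℕ) : SymFn :=
  seriesSum fun k => (k.choose n : ℚ) • schurListDdag (rowList k)

end SymFn

/-- Sum of a family of formal power series in `t` with coefficients in the completed
ring of symmetric functions, formed coefficientwise. -/
noncomputable def psSum {ι : Type*} (f : ι → PowerSeries SymFn) : PowerSeries SymFn :=
  PowerSeries.mk fun m => SymFn.seriesSum fun i => PowerSeries.coeff m (f i)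

/-! The involution sends `s_{(k)} = h_k` to `(-1)^k s_{(1^k)} = (-1)^k e_k`, where
`e_k = det (h_{1-i+j})` is a Toeplitz–Hessenberg determinant. Expanding it along its first row
gives `∑_{i+j=N} (-1)^i e_i h_j = δ_{N,0}`, so `E = ∑ (-1)^k e_k` and `H = ∑ h_k` satisfy
`E * H = 1`, degree by degree. The substitution `x ↦ (1 + t) x` is a ring homomorphism
`SymFn → SymFn⟦t⟧` multiplying a monomial of degree `d` by `∑_n C(d,n) t^n`; it sends `H` to
`∑ σ_n t^n` and `E` to `∑ σ_n^‡ t^n`, so their product is the image of `1`. -/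

open Finset

section HessenbergToeplitz

variable {R : Type*} [CommRing R] (a : ℤ → R)

noncomputable def hessenbergDet (k : ℕ) : R :=
  (Matrix.of fun i j : Fin k => a (1 - i + j)).det

theorem hessenbergDet_zero : hessenbergDet a 0 = 1 :=
  Matrix.det_fin_zero

variable {a} (ha₀ : a 0 = 1) (ha_neg : ∀ z < 0, a z = 0)
include ha₀ ha_neg

/-- The first-row minors of `hessenbergDet a (k + 1)`: expanding along the first column peels off
the unitriangular block one row at a time. -/
theorem det_succAbove_sub_eq_hessenbergDet : ∀ (k : ℕ) (j : Fin (k + 1)),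
    (Matrix.of fun r c : Fin k => a ((j.succAbove c : ℤ) - r)).det = hessenbergDet a (k - j)
  | 0, _ => by rw [Nat.zero_sub]; simp [hessenbergDet]
  | k + 1, j => by
    induction j using Fin.cases with
    | zero =>
      simp only [Fin.succAbove_zero, Fin.val_succ, Fin.val_zero, Nat.sub_zero, hessenbergDet]
      congr with r c
      push_cast
      ring_nf
    | succ j =>
      rw [Matrix.det_succ_column_zero, Fin.sum_univ_succ, Finset.sum_eq_zero]
      · simp only [Matrix.of_apply, Fin.succ_succAbove_zero, Fin.val_zero, Fin.succAbove_zero,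
          Fin.val_succ, Nat.cast_zero, sub_zero, ha₀, pow_zero, one_mul, add_zero,
          Nat.succ_sub_succ]
        rw [← det_succAbove_sub_eq_hessenbergDet k j]
        congr with r c
        simp only [Matrix.submatrix_apply, Matrix.of_apply, Fin.succ_succAbove_succ, Fin.val_succ]
        push_cast
        ring_nf
      · intro i _
        rw [Matrix.of_apply, Fin.succ_succAbove_zero, ha_neg _ (by simp; omega), mul_zero,
          zero_mul]

theorem hessenbergDet_succ (k : ℕ) :
    hessenbergDet a (k + 1) =
      ∑ p ∈ antidiagonal k, (-1) ^ p.1 * a (p.1 + 1) * hessenbergDet a p.2 := by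
  rw [hessenbergDet, Matrix.det_succ_row_zero,
    Nat.sum_antidiagonal_eq_sum_range_succ (fun i j => (-1) ^ i * a (i + 1) * hessenbergDet a j),
    ← Fin.sum_univ_eq_sum_range]
  refine Finset.sum_congr rfl fun j _ => ?_
  rw [← det_succAbove_sub_eq_hessenbergDet ha₀ ha_neg k j]
  simp only [Matrix.of_apply, Fin.val_zero]
  congr 2
  · ring_nf
  · congr with r c
    simp only [Matrix.submatrix_apply, Matrix.of_apply, Fin.val_succ]
    push_cast
    ring_nf

theorem sum_antidiagonal_neg_one_pow_mul_hessenbergDet_mul (N : ℕ) :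
    ∑ p ∈ antidiagonal N, (-1) ^ p.1 * hessenbergDet a p.1 * a p.2 =
      if N = 0 then 1 else 0 := by
  cases N with
  | zero => simp [hessenbergDet_zero, ha₀]
  | succ k =>
    rw [Nat.sum_antidiagonal_succ', hessenbergDet_succ ha₀ ha_neg, if_neg k.succ_ne_zero,
      ← Nat.sum_antidiagonal_swap, Nat.cast_zero, ha₀, mul_one, mul_sum, ← sum_add_distrib]
    refine sum_eq_zero fun p hp => ?_
    obtain rfl : p.1 + p.2 = k := mem_antidiagonal.mp hp
    have hsq : ((-1) ^ p.2 * (-1) ^ p.2 : R) = 1 := by rw [← mul_pow]; simp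
    push_cast [Prod.fst_swap, Prod.snd_swap]
    linear_combination -(-1) ^ p.1 * a (p.2 + 1) * hessenbergDet a p.1 * hsq

end HessenbergToeplitz

namespace MvPowerSeries

section Homogeneous

variable {σ R : Type*} [Semiring R]

theorem isHomogeneous_iff_coeff_eq_zero {f : MvPowerSeries σ R} {p : ℕ} :
    f.IsHomogeneous p ↔ ∀ d : σ →₀ ℕ, d.degree ≠ p → coeff d f = 0 := by
  classical
  rw [isHomogeneous_iff_eq_homogeneousComponent, MvPowerSeries.ext_iff]
  refine forall_congr' fun d => ?_
  rw [coeff_homogeneousComponent]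
  split_ifs with hd <;> simp [hd, eq_comm]

theorem isHomogeneous_one : (1 : MvPowerSeries σ R).IsHomogeneous 0 := by
  classical
  exact isHomogeneous_iff_coeff_eq_zero.mpr fun d hd => by
    rw [coeff_one, if_neg (mt (congrArg Finsupp.degree) (by simpa using hd))]

theorem IsHomogeneous.smul {f : MvPowerSeries σ R} {p : ℕ} (hf : f.IsHomogeneous p) (c : R) :
    (c • f).IsHomogeneous p := by
  rw [isHomogeneous_iff_eq_homogeneousComponent] at hf ⊢
  rw [map_smul, ← hf]

theorem isHomogeneous_sum {ι : Type*} (s : Finset ι) {f : ι → MvPowerSeries σ R} {p : ℕ}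
    (hf : ∀ i ∈ s, (f i).IsHomogeneous p) : (∑ i ∈ s, f i).IsHomogeneous p := by
  rw [isHomogeneous_iff_eq_homogeneousComponent, map_sum]
  exact sum_congr rfl fun i hi => isHomogeneous_iff_eq_homogeneousComponent.mp (hf i hi)

end Homogeneous

variable {σ R : Type*} [CommSemiring R]

noncomputable def binomialComponent (n : ℕ) (f : MvPowerSeries σ R) : MvPowerSeries σ R :=
  fun d => (d.degree.choose n : R) * coeff d f

theorem coeff_binomialComponent (n : ℕ) (f : MvPowerSeries σ R) (d : σ →₀ ℕ) :
    coeff d (binomialComponent n f) = d.degree.choose n * coeff d f :=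
  rfl

theorem binomialComponent_zero (f : MvPowerSeries σ R) : binomialComponent 0 f = f := by
  ext d
  simp [coeff_binomialComponent]

/-- The substitution `x ↦ (1 + t) x` in all variables. -/
noncomputable def binomialRescale : MvPowerSeries σ R →+* PowerSeries (MvPowerSeries σ R) where
  toFun f := PowerSeries.mk fun n => binomialComponent n f
  map_zero' := by ext; simp [coeff_binomialComponent]
  map_add' f g := by ext; simp [coeff_binomialComponent, mul_add]
  map_one' := by
    classical
    ext n d
    simp only [PowerSeries.coeff_mk, PowerSeries.coeff_one, coeff_binomialComponent, coeff_one]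
    rcases eq_or_ne d 0 with rfl | hd <;> rcases eq_or_ne n 0 with rfl | hn <;>
      simp [*, Nat.choose_eq_zero_of_lt, Nat.pos_of_ne_zero, coeff_one]
  map_mul' f g := by
    classical
    ext n d
    simp only [PowerSeries.coeff_mk, PowerSeries.coeff_mul, map_sum, coeff_mul,
      coeff_binomialComponent]
    rw [mul_sum, sum_comm]
    refine sum_congr rfl fun p hp => ?_
    rw [← mem_antidiagonal.mp hp, map_add, Nat.add_choose_eq, Nat.cast_sum, sum_mul]
    refine sum_congr rfl fun _ _ => ?_
    push_cast
    ring

theorem mk_binomialComponent (f : MvPowerSeries σ R) :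
    PowerSeries.mk (fun n => binomialComponent n f) = binomialRescale f :=
  rfl

end MvPowerSeries

namespace SymFn

open MvPowerSeries

theorem coeff_seriesSum {ι : Type*} (f : ι → SymFn) (d : ℕ →₀ ℕ) :
    coeff d (seriesSum f) = ∑' i, coeff d (f i) :=
  rfl

theorem seriesSum_eq_single {ι : Type*} {f : ι → SymFn} (i₀ : ι)
    (hf : ∀ i ≠ i₀, f i = 0) :
    seriesSum f = f i₀ := by
  ext d
  rw [coeff_seriesSum, tsum_eq_single i₀ fun i hi => by rw [hf i hi, map_zero]]

section GradedSums

variable {f g : ℕ → SymFn} (hf : ∀ k, (f k).IsHomogeneous k)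
  (hg : ∀ k, (g k).IsHomogeneous k)
include hf

theorem coeff_seriesSum_of_isHomogeneous (d : ℕ →₀ ℕ) :
    coeff d (seriesSum f) = coeff d (f d.degree) :=
  tsum_eq_single _ fun k hk => IsHomogeneous.coeff_eq_zero (hf k) (Ne.symm hk)

theorem seriesSum_choose_smul_of_isHomogeneous (n : ℕ) :
    seriesSum (fun k => (k.choose n : ℚ) • f k) = binomialComponent n (seriesSum f) := by
  ext d
  rw [coeff_seriesSum_of_isHomogeneous fun k => IsHomogeneous.smul (hf k) _,
    coeff_binomialComponent,     coeff_seriesSum_of_isHomogeneous hf, coeff_smul]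

include hg in
theorem seriesSum_mul_seriesSum_of_isHomogeneous :
    seriesSum f * seriesSum g = seriesSum fun N => ∑ p ∈ antidiagonal N, f p.1 * g p.2 := by
  have hfg (N : ℕ) : (∑ p ∈ antidiagonal N, f p.1 * g p.2).IsHomogeneous N :=
    isHomogeneous_sum _ fun p hp => mem_antidiagonal.mp hp ▸ IsHomogeneous.mul (hf p.1) (hg p.2)
  ext d
  simp only [coeff_mul, coeff_seriesSum_of_isHomogeneous hfg, map_sum,
    coeff_seriesSum_of_isHomogeneous hf, coeff_seriesSum_of_isHomogeneous hg]
  rw [sum_comm]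
  refine sum_congr rfl fun q hq => ?_
  have hdeg : q.1.degree + q.2.degree = d.degree := by rw [← map_add, mem_antidiagonal.mp hq]
  rw [sum_eq_single_of_mem (q.1.degree, q.2.degree) (mem_antidiagonal.mpr hdeg)]
  rintro p hp hne
  by_cases h₁ : p.1 = q.1.degree
  · have h₂ : p.2 ≠ q.2.degree := fun h₂ => hne (Prod.ext h₁ h₂)
    rw [IsHomogeneous.coeff_eq_zero (hg p.2) (Ne.symm h₂), mul_zero]
  · rw [IsHomogeneous.coeff_eq_zero (hf p.1) (Ne.symm h₁), zero_mul]

end GradedSums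

theorem coeff_h (n : ℕ) (d : ℕ →₀ ℕ) : coeff d (h n) = if d.degree = n then 1 else 0 :=
  rfl

theorem isHomogeneous_h (n : ℕ) : (h n).IsHomogeneous n :=
  isHomogeneous_iff_coeff_eq_zero.mpr fun d hd => by rw [coeff_h, if_neg hd]

theorem h_zero : h 0 = 1 := by
  ext d
  simp [coeff_h, coeff_one, Finsupp.degree_eq_zero_iff]

theorem hz_natCast (n : ℕ) : hz n = h n := by
  simp [hz]

theorem hz_zero : hz 0 = 1 := by
  rw [← Nat.cast_zero, hz_natCast, h_zero]

theorem hz_of_neg {z : ℤ} (hneg : z < 0) : hz z = 0 := by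
  simp [hz, hneg]

theorem isHomogeneous_hessenbergDet_hz (k : ℕ) : (hessenbergDet hz k).IsHomogeneous k := by
  induction k using Nat.strong_induction_on with
  | _ k ih =>
    cases k with
    | zero => exact hessenbergDet_zero hz ▸ isHomogeneous_one
    | succ k =>
      rw [hessenbergDet_succ hz_zero fun _ => hz_of_neg]
      refine isHomogeneous_sum _ fun p hp => ?_
      have hdeg : p.1 + 1 + p.2 = k + 1 := by rw [add_right_comm, mem_antidiagonal.mp hp]
      have hsign : (-1 : SymFn) ^ p.1 = C ((-1 : ℚ) ^ p.1) := by simp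
      have hterm : (h (p.1 + 1) * hessenbergDet hz p.2).IsHomogeneous (k + 1) :=
        hdeg ▸ IsHomogeneous.mul (isHomogeneous_h _) (ih p.2 (by omega))
      rw [hsign, mul_assoc, ← smul_eq_C_mul, ← Nat.cast_add_one, hz_natCast]
      apply IsHomogeneous.smul hterm

theorem schurList_rowList (k : ℕ) : schurList (rowList k) = h k := by
  rcases eq_or_ne k 0 with rfl | hk
  · simp only [rowList, if_pos, h_zero]
    exact Matrix.det_fin_zero
  · rw [show rowList k = [k] from if_neg hk]
    exact (Matrix.det_fin_one _).trans (by simp [hz_natCast])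

theorem conjList_rowList (k : ℕ) : conjList (rowList k) = List.replicate k 1 := by
  rcases eq_or_ne k 0 with rfl | hk
  · rfl
  · simp only [rowList, if_neg hk, conjList, List.sum_singleton]
    rw [List.map_congr_left (g := fun _ => 1) fun j hj => by
      simp [Multiset.filter_singleton, List.mem_range.mp hj]]
    simp

theorem schurList_replicate_one (k : ℕ) :
    schurList (List.replicate k 1) = hessenbergDet hz k := by
  rw [schurList, hessenbergDet,
    ← Matrix.det_submatrix_equiv_self (finCongr List.length_replicate)]
  congr with i j
  simp

theorem schurListDdag_rowList (k : ℕ) :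
    schurListDdag (rowList k) = (-1 : ℚ) ^ k • hessenbergDet hz k := by
  rw [schurListDdag, conjList_rowList, schurList_replicate_one]
  rcases eq_or_ne k 0 with rfl | hk <;> simp [rowList, *]

theorem sigma_eq_binomialComponent (n : ℕ) : sigma n = binomialComponent n (seriesSum h) := by
  simp_rw [sigma, schurList_rowList]
  exact seriesSum_choose_smul_of_isHomogeneous isHomogeneous_h n

theorem sigmaDdag_eq_binomialComponent (n : ℕ) :
    sigmaDdag n =
      binomialComponent n (seriesSum fun k => (-1 : ℚ) ^ k • hessenbergDet hz k) := by
  simp_rw [sigmaDdag, schurListDdag_rowList]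
  exact seriesSum_choose_smul_of_isHomogeneous
    (fun k => IsHomogeneous.smul (isHomogeneous_hessenbergDet_hz k) _) n

theorem seriesSum_neg_one_pow_smul_hessenbergDet_mul_seriesSum_h :
    (seriesSum fun k => (-1 : ℚ) ^ k • hessenbergDet hz k) * seriesSum h = 1 := by
  rw [seriesSum_mul_seriesSum_of_isHomogeneous
    (fun k => IsHomogeneous.smul (isHomogeneous_hessenbergDet_hz k) _) isHomogeneous_h]
  calc seriesSum (fun N =>
        ∑ p ∈ antidiagonal N, ((-1 : ℚ) ^ p.1 • hessenbergDet hz p.1) * h p.2)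
      = seriesSum fun N => if N = 0 then 1 else 0 := by
        congr with N : 1
        rw [← sum_antidiagonal_neg_one_pow_mul_hessenbergDet_mul hz_zero fun _ => hz_of_neg]
        refine sum_congr rfl fun p _ => ?_
        rw [smul_eq_C_mul, hz_natCast]
        simp
    _ = 1 := seriesSum_eq_single 0 fun N hN => if_neg hN

end SymFn

theorem psSum_C_mul_X_pow (g : ℕ → SymFn) :
    psSum (fun n => PowerSeries.C (g n) * PowerSeries.X ^ n) = PowerSeries.mk g := by
  ext1 m
  rw [psSum, PowerSeries.coeff_mk, PowerSeries.coeff_mk, SymFn.seriesSum_eq_single m]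
  · simp
  · intro i hi
    simp [PowerSeries.coeff_X_pow, Ne.symm hi]

/-- `Σ_{n≥0} σ_n^‡ t^n = (Σ_{n≥0} σ_n t^n)^{−1}` as formal power series in `t`;
in particular `σ_0^‡ = σ_0^{−1}`. -/
theorem sigmaDdag_generating_function_inverse :
    (psSum fun n => PowerSeries.C (SymFn.sigmaDdag n) * PowerSeries.X ^ n) *
        (psSum fun n => PowerSeries.C (SymFn.sigma n) * PowerSeries.X ^ n) = 1 ∧
      SymFn.sigmaDdag 0 * SymFn.sigma 0 = 1 := by
  simp only [psSum_C_mul_X_pow, SymFn.sigmaDdag_eq_binomialComponent,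
    SymFn.sigma_eq_binomialComponent, MvPowerSeries.mk_binomialComponent,
    MvPowerSeries.binomialComponent_zero]
  rw [← map_mul, SymFn.seriesSum_neg_one_pow_smul_hessenbergDet_mul_seriesSum_h, map_one]
  exact ⟨rfl, rfl⟩
end

section
/- For all integers n, d, r with 0 ≤ r and n ≥ 0: Σ_{i=0}^{n} (−1)^{n−i} C(n+r−1, i+r−1) · C(d+i−1, i) = C(d−r, n), where C(a,b) denotes the binomial coefficient (interpreted as 0 when b > a ≥ 0, and via the generalized binomial coefficient when needed in intermediate steps). -/
lemma aux_alt_sum : ∀ a n b : ℕ, a ≤ b + n →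
    (∑ j ∈ Finset.range (n + 1),
        (-1 : ℤ) ^ j * ((a.choose j : ℤ)) * (((b + n - j).choose (n - j) : ℤ))) =
      ((b + n - a).choose n : ℤ) := by
  intro a
  induction a with
  | zero =>
    intro n b h
    rw [Finset.sum_eq_single 0]
    · simp
    · intro j hj hj0
      have : Nat.choose 0 j = 0 := Nat.choose_eq_zero_of_lt (Nat.pos_of_ne_zero hj0)
      simp [this]
    · simp
  | succ a ih =>
    intro n b h
    match n with
    | 0 => simp
    | m + 1 =>
      have h1 : a ≤ b + (m + 1) := by omega
      have h2 : a ≤ b + m := by omega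
      have S1 := ih (m + 1) b h1
      have S2 := ih m b h2
      rw [Finset.sum_range_succ'] at S1 ⊢
      have hterm : ∀ j ∈ Finset.range (m + 1),
          (-1 : ℤ) ^ (j + 1) * (((a + 1).choose (j + 1) : ℤ)) *
              (((b + (m + 1) - (j + 1)).choose ((m + 1) - (j + 1)) : ℤ)) =
            (-1 : ℤ) ^ (j + 1) * ((a.choose (j + 1) : ℤ)) *
                (((b + (m + 1) - (j + 1)).choose ((m + 1) - (j + 1)) : ℤ)) -
              (-1 : ℤ) ^ j * ((a.choose j : ℤ)) *
                (((b + m - j).choose (m - j) : ℤ)) := by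
        intro j hj
        have e1 : b + (m + 1) - (j + 1) = b + m - j := by omega
        have e2 : (m + 1) - (j + 1) = m - j := by omega
        rw [Nat.choose_succ_succ, e1, e2]
        push_cast
        ring
      rw [Finset.sum_congr rfl hterm, Finset.sum_sub_distrib, S2]
      have e0 : ((a + 1 : ℕ).choose 0 : ℤ) = (a.choose 0 : ℤ) := by simp
      have hk : b + (m + 1) - a = (b + m - a) + 1 := by omega
      have hk2 : b + (m + 1) - (a + 1) = b + m - a := by omega
      rw [hk] at S1
      rw [hk2]
      have pascal : ((b + m - a + 1).choose (m + 1) : ℤ) =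
          ((b + m - a).choose m : ℤ) + ((b + m - a).choose (m + 1) : ℤ) := by
        rw [Nat.choose_succ_succ]; push_cast; ring
      have : (∑ j ∈ Finset.range (m + 1),
          (-1 : ℤ) ^ (j + 1) * ((a.choose (j + 1) : ℤ)) *
            (((b + (m + 1) - (j + 1)).choose ((m + 1) - (j + 1)) : ℤ))) +
          (-1 : ℤ) ^ 0 * (((a + 1).choose 0 : ℤ)) *
            (((b + (m + 1) - 0).choose ((m + 1) - 0) : ℤ)) =
          ((b + m - a + 1).choose (m + 1) : ℤ) := by
        rw [e0]; exact S1
      linarith [this, pascal]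

/-- `Σ_{i=0}^{n} (−1)^{n−i} C(n+r−1, i+r−1) · C(d+i−1, i) = C(d−r, n)`
for `1 ≤ r ≤ d` and `n ≥ 0`. -/
theorem alternating_binomial_sum_eq_choose (n r d : ℕ) (hr : 1 ≤ r) (hrd : r ≤ d) :
    (∑ i ∈ Finset.range (n + 1),
        (-1 : ℤ) ^ (n - i) * ((n + r - 1).choose (i + r - 1) : ℤ) *
          ((d + i - 1).choose i : ℤ)) =
      ((d - r).choose n : ℤ) := by
  have key := aux_alt_sum (n + r - 1) n (d - 1) (by omega)
  have hrw : ((d - 1) + n - (n + r - 1)) = d - r := by omega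
  rw [hrw] at key
  rw [← key]
  rw [← Finset.sum_range_reflect (fun i => (-1 : ℤ) ^ (n - i) *
      ((n + r - 1).choose (i + r - 1) : ℤ) * ((d + i - 1).choose i : ℤ)) (n + 1)]
  apply Finset.sum_congr rfl
  intro j hj
  simp only [Finset.mem_range] at hj
  have hjn : j ≤ n := by omega
  have e1 : n + 1 - 1 - j = n - j := by omega
  have e2 : n - (n - j) = j := by omega
  have e3 : (n - j) + r - 1 = (n + r - 1) - j := by omega
  have e4 : d + (n - j) - 1 = (d - 1) + n - j := by omega
  have e5 : (n + r - 1).choose ((n + r - 1) - j) = (n + r - 1).choose j :=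
    Nat.choose_symm (by omega)
  rw [e1, e2, e3, e4, e5]
end
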